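/- Let q ≥ 3 be an integer and Γ_q the Hecke triangle group in SL(2,ℝ). Let h ∈ Γ_q satisfy h • 0 > h • ∞ ≥ 0 in ℝ ∪ {∞} (with the convention r < ∞ for all r ∈ ℝ). Then there exist unique ℓ ∈ ℕ₀ and k₁, …, k_ℓ ∈ {1, …, q−1} such that h = p_{k₁} ⋯ p_{k_ℓ} · S or h = −p_{k₁} ⋯ p_{k_ℓ} · S (the empty product being the identity matrix). -/

import Mathlib

noncomputable section

open OnePoint

abbrev SL2 := Matrix.SpecialLinearGroup (Fin 2) ℝ

/-- `S = [[0,1],[−1,0]] ∈ SL(2,ℝ)`. -/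
def Smat : SL2 := ⟨!![0, 1; -1, 0], by norm_num [Matrix.det_fin_two_of]⟩

/-- `T_q = [[1, λ_q],[0,1]] ∈ SL(2,ℝ)` where `λ_q = 2cos(π/q)`. -/
def Tmat (q : ℕ) : SL2 :=
  ⟨!![1, 2 * Real.cos (Real.pi / q); 0, 1], by norm_num [Matrix.det_fin_two_of]⟩

/-- The Hecke triangle group `Γ_q ≤ SL(2,ℝ)`, generated by `S` and `T_q`. -/
def Hecke (q : ℕ) : Subgroup SL2 := Subgroup.closure {Smat, Tmat q}

/-- The matrix `p_k = (1/sin(π/q)) · [[sin(kπ/q), sin((k+1)π/q)], [sin((k−1)π/q), sin(kπ/q)]]`. -/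
def pMat (q : ℕ) (k : ℤ) : Matrix (Fin 2) (Fin 2) ℝ :=
  (Real.sin (Real.pi / q))⁻¹ •
    !![Real.sin ((k : ℝ) * Real.pi / q), Real.sin (((k : ℝ) + 1) * Real.pi / q);
       Real.sin (((k : ℝ) - 1) * Real.pi / q), Real.sin ((k : ℝ) * Real.pi / q)]

/-- The Möbius action of `SL(2,ℝ)` on `ℝ ∪ {∞}`:
`[[a,b],[c,d]] • x = (ax+b)/(cx+d)` for `x ∈ ℝ` with `cx+d ≠ 0`, `= ∞` if `cx+d = 0`;
`[[a,b],[c,d]] • ∞ = a/c` if `c ≠ 0` and `= ∞` if `c = 0`. -/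
def mob (g : SL2) (x : OnePoint ℝ) : OnePoint ℝ :=
  match x with
  | OnePoint.some r =>
      if g.1 1 0 * r + g.1 1 1 = 0 then ∞
      else (((g.1 0 0 * r + g.1 0 1) / (g.1 1 0 * r + g.1 1 1) : ℝ) : OnePoint ℝ)
  | OnePoint.infty =>
      if g.1 1 0 = 0 then ∞ else ((g.1 0 0 / g.1 1 0 : ℝ) : OnePoint ℝ)

/-- The strict order on `ℝ ∪ {∞}` extending that of `ℝ` by `r < ∞` for every `r ∈ ℝ`. -/
def opLT : OnePoint ℝ → OnePoint ℝ → Prop :=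
  fun u v =>
    match u, v with
    | OnePoint.some r, OnePoint.some s => r < s
    | OnePoint.some _, OnePoint.infty => True
    | OnePoint.infty, _ => False

/-- The order on `ℝ ∪ {∞}` extending that of `ℝ` by `r < ∞` for every `r ∈ ℝ`. -/
def opLE (u v : OnePoint ℝ) : Prop := u = v ∨ opLT u v

/-!
Write `P` for a product `p_{k₁} ⋯ p_{k_ℓ}` with `1 ≤ kᵢ ≤ q - 1`. The matrices `±S^a P S^b`
(`a, b ∈ {0, 1}`) are stable under left multiplication by `S`, `T_q` and their inverses, because
`T_q S p_k = -p_{k+1}`, `p_0 = S`, `p_1 = T_q` and `p_q = -S`; so every element of `Γ_q` has this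
shape. Each `P` lies in `SL(2, ℝ≥0)`, and the order condition on `h • ∞` and `h • 0` forces a sign
pattern on the entries of `h` that only `±P S` can match.

For uniqueness, the linear form `v ↦ sin (kπ/q) v₁ - sin ((k-1)π/q) v₀` is nonnegative on the first
column of `p_k X` but negative on that of `p_j X` when `j < k` and `X ∈ SL(2, ℝ≥0)`; so the first
factor of `P` is determined by `P`. A nonempty `P` has a positive off-diagonal entry, so it is not
the identity.
-/

namespace HeckeGroup

open Real Matrix

def heckeSin (q : ℕ) (x : ℝ) : ℝ := sin (x * π / q)

variable {q : ℕ}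

@[simp] lemma heckeSin_zero : heckeSin q 0 = 0 := by simp [heckeSin]

lemma heckeSin_neg (x : ℝ) : heckeSin q (-x) = -heckeSin q x := by
  simp [heckeSin, neg_mul, neg_div, sin_neg]

lemma heckeSin_self_add (hq : q ≠ 0) (x : ℝ) : heckeSin q (q + x) = -heckeSin q x := by
  have : ((q : ℝ) + x) * π / q = x * π / q + π := by field_simp; ring
  simp only [heckeSin, this, sin_add_pi]

lemma heckeSin_pos {x : ℝ} (h0 : 0 < x) (h1 : x < q) : 0 < heckeSin q x := by
  have hq : (0 : ℝ) < q := h0.trans h1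
  refine sin_pos_of_pos_of_lt_pi (by positivity) ?_
  rw [div_lt_iff₀ hq]
  nlinarith [pi_pos]

lemma heckeSin_nonneg {x : ℝ} (h0 : 0 ≤ x) (h1 : x ≤ q) : 0 ≤ heckeSin q x := by
  refine sin_nonneg_of_nonneg_of_le_pi (by positivity) (div_le_of_le_mul₀ (by positivity)
    pi_pos.le ?_)
  nlinarith [pi_pos]

lemma heckeSin_add_one_add_heckeSin_sub_one (x : ℝ) :
    heckeSin q (x + 1) + heckeSin q (x - 1) = 2 * cos (π / q) * heckeSin q x := by
  simp only [heckeSin, add_mul, sub_mul, add_div, sub_div, one_mul, sin_add, sin_sub]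
  ring

lemma heckeSin_mul_heckeSin_sub_one (x y : ℝ) :
    heckeSin q x * heckeSin q (y - 1) - heckeSin q (x - 1) * heckeSin q y =
      heckeSin q 1 * heckeSin q (y - x) := by
  simp only [heckeSin, sub_mul, sub_div, one_mul, sin_sub]
  ring

lemma heckeSin_one_pos (hq : 2 ≤ q) : 0 < heckeSin q 1 :=
  heckeSin_pos one_pos (by exact_mod_cast hq)

lemma pMat_eq (k : ℤ) : pMat q k =
    (heckeSin q 1)⁻¹ • !![heckeSin q k, heckeSin q (k + 1); heckeSin q (k - 1), heckeSin q k] := by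
  simp [pMat, heckeSin]

lemma Smat_val : Smat.1 = !![0, 1; -1, 0] := rfl

lemma Tmat_val : (Tmat q).1 = !![1, 2 * cos (π / q); 0, 1] := rfl

lemma Smat_mul_Smat : Smat.1 * Smat.1 = -1 := by
  rw [Smat_val]; ext i j; fin_cases i <;> fin_cases j <;> simp

lemma pMat_zero (hq : 2 ≤ q) : pMat q 0 = Smat.1 := by
  have := (heckeSin_one_pos hq).ne'
  rw [pMat_eq, Smat_val]; ext i j; fin_cases i <;> fin_cases j <;> simp [heckeSin_neg, this]

lemma pMat_one (hq : 2 ≤ q) : pMat q 1 = (Tmat q).1 := by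
  have := (heckeSin_one_pos hq).ne'
  have h2 := heckeSin_add_one_add_heckeSin_sub_one (q := q) 1
  rw [pMat_eq, Tmat_val]; ext i j; fin_cases i <;> fin_cases j <;> simp [this]
  · norm_num at h2; field_simp; linarith

lemma pMat_self (hq : 2 ≤ q) : pMat q q = -Smat.1 := by
  have hq0 : q ≠ 0 := by omega
  have := (heckeSin_one_pos hq).ne'
  have h1 := heckeSin_self_add hq0 1
  have h2 := heckeSin_self_add hq0 (-1)
  have h0 := heckeSin_self_add hq0 0
  rw [heckeSin_neg, ← sub_eq_add_neg] at h2
  simp only [add_zero, heckeSin_zero, neg_zero] at h0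
  rw [pMat_eq, Smat_val]; ext i j; fin_cases i <;> fin_cases j <;> simp [h0, h1, h2, this]

lemma Tmat_mul_Smat_mul_pMat_mul (k : ℤ) (X : Matrix (Fin 2) (Fin 2) ℝ) :
    (Tmat q).1 * (Smat.1 * (pMat q k * X)) = -(pMat q (k + 1) * X) := by
  have h0 := heckeSin_add_one_add_heckeSin_sub_one (q := q) k
  have h1 := heckeSin_add_one_add_heckeSin_sub_one (q := q) (k + 1)
  rw [add_sub_cancel_right] at h1
  suffices (Tmat q).1 * (Smat.1 * pMat q k) = -pMat q (k + 1) by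
    rw [← mul_assoc, ← mul_assoc, mul_assoc _ Smat.1, this, neg_mul]
  rw [pMat_eq, pMat_eq, Tmat_val, Smat_val]
  ext i j; fin_cases i <;> fin_cases j <;> simp [Matrix.mul_apply, Fin.sum_univ_two] <;>
    first
    | linear_combination (heckeSin q 1)⁻¹ * h0
    | linear_combination (heckeSin q 1)⁻¹ * h1

lemma det_pMat (hq : 2 ≤ q) (k : ℤ) : (pMat q k).det = 1 := by
  have hs := (heckeSin_one_pos hq).ne'
  have h := heckeSin_mul_heckeSin_sub_one (q := q) (k + 1) k
  rw [add_sub_cancel_right, sub_add_cancel_left, heckeSin_neg] at h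
  rw [pMat_eq, det_smul, det_fin_two_of, Fintype.card_fin]
  field_simp
  linear_combination -h

def nonnegSL2 : Submonoid (Matrix (Fin 2) (Fin 2) ℝ) where
  carrier := {m | (∀ i j, 0 ≤ m i j) ∧ m.det = 1}
  one_mem' := ⟨fun i j => by fin_cases i <;> fin_cases j <;> simp, det_one⟩
  mul_mem' := by
    rintro a b ⟨ha, hda⟩ ⟨hb, hdb⟩
    refine ⟨fun i j => ?_, by rw [det_mul, hda, hdb, one_mul]⟩
    rw [mul_apply, Fin.sum_univ_two]
    have := ha i 0; have := ha i 1; have := hb 0 j; have := hb 1 j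
    positivity

lemma diag_pos_of_mem_nonnegSL2 {m : Matrix (Fin 2) (Fin 2) ℝ} (hm : m ∈ nonnegSL2) :
    0 < m 0 0 ∧ 0 < m 1 1 := by
  obtain ⟨hn, hd⟩ := hm
  rw [det_fin_two] at hd
  have : 0 < m 0 0 * m 1 1 := by nlinarith [hn 0 1, hn 1 0]
  exact ⟨pos_of_mul_pos_left this (hn 1 1), pos_of_mul_pos_right this (hn 0 0)⟩

lemma pMat_mem_nonnegSL2 {k : ℕ} (hk1 : 1 ≤ k) (hk : k ≤ q - 1) :
    pMat q k ∈ nonnegSL2 := by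
  have hq : 2 ≤ q := by omega
  have hkq : (k : ℝ) + 1 ≤ q := by exact_mod_cast (show k + 1 ≤ q by omega)
  have hk1' : (1 : ℝ) ≤ k := by exact_mod_cast hk1
  have hs := (inv_pos.2 (heckeSin_one_pos hq)).le
  have h0 : 0 ≤ heckeSin q k := heckeSin_nonneg (by linarith) (by linarith)
  have h1 : 0 ≤ heckeSin q (k + 1) := heckeSin_nonneg (by linarith) hkq
  have h2 : 0 ≤ heckeSin q (k - 1) := heckeSin_nonneg (by linarith) (by linarith)
  refine ⟨fun i j => ?_, det_pMat hq k⟩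
  rw [pMat_eq]
  fin_cases i <;> fin_cases j <;> simp <;> positivity

abbrev pProd (q : ℕ) (L : List ℕ) : Matrix (Fin 2) (Fin 2) ℝ :=
  (L.map fun k => pMat q (k : ℤ)).prod

lemma pProd_mem_nonnegSL2 {L : List ℕ} (hL : ∀ k ∈ L, 1 ≤ k ∧ k ≤ q - 1) :
    pProd q L ∈ nonnegSL2 :=
  Submonoid.list_prod_mem _ <| by
    simpa using fun k hk => pMat_mem_nonnegSL2 (hL k hk).1 (hL k hk).2

lemma heckeSin_mul_pMat_mul_apply_sub (hq : 2 ≤ q) (k : ℤ) (y : ℝ)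
    (X : Matrix (Fin 2) (Fin 2) ℝ) :
    heckeSin q y * (pMat q k * X) 1 0 - heckeSin q (y - 1) * (pMat q k * X) 0 0 =
      -(heckeSin q (y - k) * X 0 0 + heckeSin q (y - k - 1) * X 1 0) := by
  have hs := (heckeSin_one_pos hq).ne'
  have h0 := heckeSin_mul_heckeSin_sub_one (q := q) y k
  have h1 := heckeSin_mul_heckeSin_sub_one (q := q) y (k + 1)
  rw [add_sub_cancel_right] at h1
  have e0 : heckeSin q (k - y) = -heckeSin q (y - k) := by rw [← heckeSin_neg, neg_sub]
  have e1 : heckeSin q (k + 1 - y) = -heckeSin q (y - k - 1) := by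
    rw [← heckeSin_neg]; ring_nf
  simp only [pMat_eq, smul_of, smul_cons, smul_eq_mul, smul_empty, mul_apply, of_apply,
    cons_val', cons_val_fin_one, cons_val_one, Fin.sum_univ_two, cons_val_zero, neg_add_rev]
  field_simp
  linear_combination X 0 0 * h0 + X 1 0 * h1 + heckeSin q 1 * X 0 0 * e0 +
    heckeSin q 1 * X 1 0 * e1

lemma pMat_mul_ne_pMat_mul_of_lt {j k : ℕ} (hj : 1 ≤ j) (hjk : j < k) (hk : k ≤ q - 1)
    {X Y : Matrix (Fin 2) (Fin 2) ℝ} (hX : X ∈ nonnegSL2) (hY : Y ∈ nonnegSL2) :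
    pMat q j * X ≠ pMat q k * Y := by
  intro h
  have hq : 2 ≤ q := by omega
  have hX' := heckeSin_mul_pMat_mul_apply_sub hq j k X
  have hY' := heckeSin_mul_pMat_mul_apply_sub hq k k Y
  rw [h, hY'] at hX'
  push_cast at hX'
  simp only [sub_self, heckeSin_zero, zero_sub, heckeSin_neg] at hX'
  have hjk' : (j : ℝ) + 1 ≤ k := by exact_mod_cast hjk
  have hkq : (k : ℝ) + 1 ≤ q := by exact_mod_cast (show k + 1 ≤ q by omega)
  have hj' : (1 : ℝ) ≤ j := by exact_mod_cast hj
  have h0 : 0 < heckeSin q (k - j) := heckeSin_pos (by linarith) (by linarith)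
  have h1 : 0 ≤ heckeSin q (k - j - 1) := heckeSin_nonneg (by linarith) (by linarith)
  linarith [mul_pos h0 (diag_pos_of_mem_nonnegSL2 hX).1, mul_nonneg h1 (hX.1 1 0),
    mul_nonneg (heckeSin_one_pos hq).le (hY.1 1 0)]

lemma pMat_mul_apply_zero_one_add_pos (hq : 3 ≤ q) {k : ℕ} (hk1 : 1 ≤ k) (hk : k ≤ q - 1)
    {X : Matrix (Fin 2) (Fin 2) ℝ} (hX : X ∈ nonnegSL2) :
    0 < (pMat q k * X) 0 1 + (pMat q k * X) 1 0 := by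
  have hkq : (k : ℝ) + 1 ≤ q := by exact_mod_cast (show k + 1 ≤ q by omega)
  have hk1' : (1 : ℝ) ≤ k := by exact_mod_cast hk1
  have hs := heckeSin_one_pos (q := q) (by omega)
  have h0 : 0 ≤ heckeSin q k := heckeSin_nonneg (by linarith) (by linarith)
  have h1 : 0 ≤ heckeSin q (k + 1) := heckeSin_nonneg (by linarith) hkq
  have h2 : 0 ≤ heckeSin q (k - 1) := heckeSin_nonneg (by linarith) (by linarith)
  obtain ⟨hX00, hX11⟩ := diag_pos_of_mem_nonnegSL2 hX
  have key : 0 < heckeSin q (k + 1) * X 1 1 + heckeSin q (k - 1) * X 0 0 := by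
    rcases (show k + 1 < q ∨ 2 ≤ k by omega) with hk' | hk'
    · have : (k : ℝ) + 1 < q := by exact_mod_cast hk'
      exact add_pos_of_pos_of_nonneg (mul_pos (heckeSin_pos (by linarith) this) hX11)
        (mul_nonneg h2 hX00.le)
    · have : (2 : ℝ) ≤ k := by exact_mod_cast hk'
      exact add_pos_of_nonneg_of_pos (mul_nonneg h1 hX11.le)
        (mul_pos (heckeSin_pos (by linarith) (by linarith)) hX00)
  simp only [pMat_eq, smul_of, smul_cons, smul_eq_mul, smul_empty, mul_apply, of_apply,
    cons_val', cons_val_fin_one, cons_val_one, Fin.sum_univ_two, cons_val_zero, Int.cast_natCast]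
  rw [← mul_lt_mul_iff_of_pos_left hs]
  field_simp
  linarith [mul_nonneg h0 (hX.1 0 1), mul_nonneg h0 (hX.1 1 0)]

@[simp] lemma pProd_nil : pProd q [] = 1 := rfl

lemma pProd_cons (k : ℕ) (L : List ℕ) : pProd q (k :: L) = pMat q k * pProd q L := by
  simp [pProd]

lemma pProd_apply_zero_one_add_pos (hq : 3 ≤ q) {L : List ℕ}
    (hL : ∀ k ∈ L, 1 ≤ k ∧ k ≤ q - 1) (hne : L ≠ []) : 0 < pProd q L 0 1 + pProd q L 1 0 := by
  obtain ⟨k, L, rfl⟩ := List.exists_cons_of_ne_nil hne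
  have hk := hL k List.mem_cons_self
  rw [pProd_cons]
  exact pMat_mul_apply_zero_one_add_pos hq hk.1 hk.2
    (pProd_mem_nonnegSL2 fun j hj => hL j (List.mem_cons_of_mem k hj))

lemma pProd_injective (hq : 3 ≤ q) {L L' : List ℕ} (hL : ∀ k ∈ L, 1 ≤ k ∧ k ≤ q - 1)
    (hL' : ∀ k ∈ L', 1 ≤ k ∧ k ≤ q - 1) (h : pProd q L = pProd q L') : L = L' := by
  induction L generalizing L' with
  | nil =>
    by_contra hne
    have := pProd_apply_zero_one_add_pos hq hL' (Ne.symm hne)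
    simp [← h] at this
  | cons j L ih =>
    rcases L' with _ | ⟨k, L'⟩
    · have := pProd_apply_zero_one_add_pos hq hL (List.cons_ne_nil j L)
      simp [h] at this
    have hj := hL j List.mem_cons_self
    have hk := hL' k List.mem_cons_self
    have hLt : ∀ i ∈ L, 1 ≤ i ∧ i ≤ q - 1 := fun i hi => hL i (List.mem_cons_of_mem j hi)
    have hLt' : ∀ i ∈ L', 1 ≤ i ∧ i ≤ q - 1 := fun i hi => hL' i (List.mem_cons_of_mem k hi)
    rw [pProd_cons, pProd_cons] at h
    have hP := pProd_mem_nonnegSL2 hLt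
    have hP' := pProd_mem_nonnegSL2 hLt'
    obtain rfl : j = k := by
      by_contra hne
      rcases Nat.lt_or_gt_of_ne hne with hlt | hlt
      · exact pMat_mul_ne_pMat_mul_of_lt hj.1 hlt hk.2 hP hP' h
      · exact pMat_mul_ne_pMat_mul_of_lt hk.1 hlt hj.2 hP' hP h.symm
    have hunit : IsUnit (pMat q j) := by
      rw [isUnit_iff_isUnit_det, det_pMat (by omega)]; exact isUnit_one
    rw [ih hLt hLt' (hunit.mul_left_cancel h)]

def normalForms (q : ℕ) : Set (Matrix (Fin 2) (Fin 2) ℝ) :=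
  {m | ∃ (a b : Bool) (L : List ℕ), (∀ k ∈ L, 1 ≤ k ∧ k ≤ q - 1) ∧
    (m = Smat.1 ^ a.toNat * pProd q L * Smat.1 ^ b.toNat ∨
      m = -(Smat.1 ^ a.toNat * pProd q L * Smat.1 ^ b.toNat))}

lemma one_mem_normalForms : 1 ∈ normalForms q :=
  ⟨false, false, [], by simp, Or.inl (by simp)⟩

lemma neg_mem_normalForms {m : Matrix (Fin 2) (Fin 2) ℝ} (hm : m ∈ normalForms q) :
    -m ∈ normalForms q := by
  obtain ⟨a, b, L, hL, rfl | rfl⟩ := hm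
  exacts [⟨a, b, L, hL, Or.inr rfl⟩, ⟨a, b, L, hL, Or.inl (neg_neg _)⟩]

lemma mul_mem_normalForms_of_forall {m : Matrix (Fin 2) (Fin 2) ℝ}
    (h : ∀ (a b : Bool) (L : List ℕ), (∀ k ∈ L, 1 ≤ k ∧ k ≤ q - 1) →
      m * (Smat.1 ^ a.toNat * pProd q L * Smat.1 ^ b.toNat) ∈ normalForms q)
    {x : Matrix (Fin 2) (Fin 2) ℝ} (hx : x ∈ normalForms q) : m * x ∈ normalForms q := by
  obtain ⟨a, b, L, hL, rfl | rfl⟩ := hx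
  exacts [h a b L hL, mul_neg m _ ▸ neg_mem_normalForms (h a b L hL)]

lemma Smat_mul_mem_normalForms {m : Matrix (Fin 2) (Fin 2) ℝ} (hm : m ∈ normalForms q) :
    Smat.1 * m ∈ normalForms q := by
  refine mul_mem_normalForms_of_forall (fun a b L hL => ?_) hm
  cases a
  · exact ⟨true, b, L, hL, Or.inl (by simp [mul_assoc])⟩
  · exact ⟨false, b, L, hL, Or.inr (by simp [← mul_assoc, Smat_mul_Smat])⟩

lemma Tmat_mul_mem_normalForms (hq : 2 ≤ q) {m : Matrix (Fin 2) (Fin 2) ℝ}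
    (hm : m ∈ normalForms q) : (Tmat q).1 * m ∈ normalForms q := by
  refine mul_mem_normalForms_of_forall (fun a b L hL => ?_) hm
  cases a
  · refine ⟨false, b, 1 :: L, ?_, Or.inl ?_⟩
    · simpa [show 1 ≤ q - 1 by omega] using hL
    · simp [pProd_cons, pMat_one hq, mul_assoc]
  rcases L with _ | ⟨k, L⟩
  · cases b
    · exact ⟨false, true, [1], by simp; omega, Or.inl (by simp [pProd_cons, pMat_one hq])⟩
    · exact ⟨false, false, [1], by simp; omega,
        Or.inr (by simp [pProd_cons, pMat_one hq, Smat_mul_Smat])⟩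
  have hk := hL k List.mem_cons_self
  have hLt : ∀ i ∈ L, 1 ≤ i ∧ i ≤ q - 1 := fun i hi => hL i (List.mem_cons_of_mem k hi)
  have hT := Tmat_mul_Smat_mul_pMat_mul (q := q) k (pProd q L * Smat.1 ^ b.toNat)
  rcases hk.2.lt_or_eq with hlt | rfl
  · exact ⟨false, b, (k + 1) :: L, by simpa [hlt] using hLt,
      Or.inr (by simpa [pProd_cons, mul_assoc] using hT)⟩
  · refine ⟨true, b, L, hLt, Or.inl ?_⟩
    rw [show ((q - 1 : ℕ) : ℤ) + 1 = q by omega, pMat_self hq, neg_mul, neg_neg] at hT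
    simpa [pProd_cons, mul_assoc] using hT

lemma pMat_mul_mem_normalForms (hq : 2 ≤ q) (k : ℕ) {m : Matrix (Fin 2) (Fin 2) ℝ}
    (hm : m ∈ normalForms q) : pMat q k * m ∈ normalForms q := by
  induction k with
  | zero => simpa [pMat_zero hq] using Smat_mul_mem_normalForms hm
  | succ k ih =>
    have h := Tmat_mul_Smat_mul_pMat_mul (q := q) k m
    push_cast
    rw [← neg_neg (pMat q _ * m), ← h]
    exact neg_mem_normalForms (Tmat_mul_mem_normalForms hq (Smat_mul_mem_normalForms ih))

lemma val_mul (g g' : SL2) : (g * g').1 = g.1 * g'.1 := rfl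

lemma val_inv_mul_of_val_mul {g : SL2} {x m : Matrix (Fin 2) (Fin 2) ℝ} (h : g.1 * x = m) :
    (g⁻¹).1 * m = x := by
  rw [← h, ← mul_assoc, ← val_mul, inv_mul_cancel]
  exact one_mul x

lemma mem_normalForms_of_mem_Hecke (hq : 2 ≤ q) {g : SL2} (hg : g ∈ Hecke q) :
    g.1 ∈ normalForms q := by
  induction hg using Subgroup.closure_induction_left with
  | one => exact one_mem_normalForms
  | mul_left x hx y _ hy =>
    rw [val_mul]
    rcases hx with rfl | rfl
    exacts [Smat_mul_mem_normalForms hy, Tmat_mul_mem_normalForms hq hy]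
  | inv_mul_cancel x hx y _ hy =>
    rw [val_mul]
    rcases hx with rfl | rfl
    · rw [val_inv_mul_of_val_mul (x := -(Smat.1 * y.1))
        (by rw [mul_neg, ← mul_assoc, Smat_mul_Smat, neg_one_mul, neg_neg])]
      exact neg_mem_normalForms (Smat_mul_mem_normalForms hy)
    · rw [val_inv_mul_of_val_mul (x := -(Smat.1 * (pMat q (q - 1 : ℕ) * (Smat.1 * y.1))))
        (by rw [mul_neg, Tmat_mul_Smat_mul_pMat_mul, show ((q - 1 : ℕ) : ℤ) + 1 = q by omega,
          pMat_self hq, neg_mul, neg_neg, ← mul_assoc, Smat_mul_Smat, neg_one_mul, neg_neg])]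
      exact neg_mem_normalForms (Smat_mul_mem_normalForms
        (pMat_mul_mem_normalForms hq _ (Smat_mul_mem_normalForms hy)))

lemma exists_eq_neg_pProd_mul_Smat (hq : 3 ≤ q) {m : Matrix (Fin 2) (Fin 2) ℝ}
    (hm : m ∈ normalForms q) (h00 : 0 ≤ m 0 0) (h10 : 0 < m 1 0) (h11 : m 1 1 ≤ 0) :
    ∃ L : List ℕ, (∀ k ∈ L, 1 ≤ k ∧ k ≤ q - 1) ∧ m = -(pProd q L * Smat.1) := by
  obtain ⟨a, b, L, hL, hm⟩ := hm
  have hP := pProd_mem_nonnegSL2 hL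
  obtain ⟨hP00, hP11⟩ := diag_pos_of_mem_nonnegSL2 hP
  have hP01 := hP.1 0 1
  have hP10 := hP.1 1 0
  cases a <;> cases b <;> rcases hm with rfl | rfl <;>
    simp [Smat_val, mul_apply, vecMul, dotProduct, Fin.sum_univ_two] at h00 h10 h11
  all_goals try (exfalso; linarith)
  · exact ⟨L, hL, by simp⟩
  · obtain rfl : L = [] := by
      by_contra hne
      linarith [pProd_apply_zero_one_add_pos hq hL hne]
    exact ⟨[], by simp, by simp⟩

lemma eq_of_pProd_mul_Smat (hq : 3 ≤ q) {L L' : List ℕ} (hL : ∀ k ∈ L, 1 ≤ k ∧ k ≤ q - 1)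
    (hL' : ∀ k ∈ L', 1 ≤ k ∧ k ≤ q - 1) {m : Matrix (Fin 2) (Fin 2) ℝ}
    (h : m = pProd q L * Smat.1 ∨ m = -(pProd q L * Smat.1))
    (h' : m = pProd q L' * Smat.1 ∨ m = -(pProd q L' * Smat.1)) : L = L' := by
  have entry : ∀ P : Matrix (Fin 2) (Fin 2) ℝ, (P * Smat.1) 0 1 = P 0 0 := fun P => by
    simp [Smat_val, mul_apply, Fin.sum_univ_two]
  have hP := (diag_pos_of_mem_nonnegSL2 (pProd_mem_nonnegSL2 hL)).1
  have hP' := (diag_pos_of_mem_nonnegSL2 (pProd_mem_nonnegSL2 hL')).1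
  have hS : pProd q L * Smat.1 = pProd q L' * Smat.1 := by
    rcases h with rfl | rfl <;> rcases h' with h' | h'
    · exact h'
    · have := congrFun (congrFun h' 0) 1
      simp only [Matrix.neg_apply, entry] at this
      linarith
    · have := congrFun (congrFun h' 0) 1
      simp only [Matrix.neg_apply, entry] at this
      linarith
    · exact neg_inj.mp h'
  have hunit : IsUnit Smat.1 := by
    rw [isUnit_iff_isUnit_det, Smat.2]; exact isUnit_one
  exact pProd_injective hq hL hL' (hunit.mul_right_cancel hS)

lemma mul_nonpos_of_div_lt_div {a b c d : ℝ} (hdet : a * d - b * c = 1) (h : a / c < b / d) :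
    c * d ≤ 0 := by
  by_contra! hcd
  have hc : c ≠ 0 := left_ne_zero_of_mul hcd.ne'
  have hd : d ≠ 0 := right_ne_zero_of_mul hcd.ne'
  have := mul_lt_mul_of_pos_right h hcd
  rw [show a / c * (c * d) = a * d by field_simp, show b / d * (c * d) = b * c by field_simp]
    at this
  linarith

lemma entries_of_order {g : SL2}
    (hord : opLT (mob g ∞) (mob g ((0 : ℝ) : OnePoint ℝ)) ∧
      opLE ((0 : ℝ) : OnePoint ℝ) (mob g ∞)) :
    g.1 1 0 ≠ 0 ∧ 0 ≤ g.1 0 0 * g.1 1 0 ∧ g.1 1 0 * g.1 1 1 ≤ 0 := by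
  obtain ⟨hlt, hle⟩ := hord
  have hc : g.1 1 0 ≠ 0 := by
    intro hc
    simp [mob, hc, opLT] at hlt
  have hinf : mob g ∞ = ((g.1 0 0 / g.1 1 0 : ℝ) : OnePoint ℝ) := by simp [mob, hc]
  have hac : 0 ≤ g.1 0 0 / g.1 1 0 := by
    rw [hinf] at hle
    rcases hle with h | h
    exacts [(OnePoint.coe_eq_coe.mp h).le, h.le]
  refine ⟨hc, ?_, ?_⟩
  · rw [show g.1 0 0 * g.1 1 0 = g.1 0 0 / g.1 1 0 * g.1 1 0 ^ 2 by field_simp]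
    positivity
  · by_cases hd : g.1 1 1 = 0
    · simp [hd]
    have hdet : g.1 0 0 * g.1 1 1 - g.1 0 1 * g.1 1 0 = 1 := by
      rw [← det_fin_two]; exact g.2
    have h0 : mob g ((0 : ℝ) : OnePoint ℝ) = ((g.1 0 1 / g.1 1 1 : ℝ) : OnePoint ℝ) := by
      simp [mob, hd]
    rw [hinf, h0] at hlt
    exact mul_nonpos_of_div_lt_div hdet hlt

end HeckeGroup

open HeckeGroup

/-- if `h ∈ Γ_q` satisfies `h • 0 > h • ∞ ≥ 0` in `ℝ ∪ {∞}`, then there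
are unique `ℓ ∈ ℕ₀` and `k₁, …, k_ℓ ∈ {1, …, q−1}` with `h = ±(p_{k₁} ⋯ p_{k_ℓ} · S)`
(the empty product being the identity matrix). -/
theorem stmt_12 (q : ℕ) (hq : 3 ≤ q) (h : SL2) (hh : h ∈ Hecke q)
    (hord : opLT (mob h ∞) (mob h ((0 : ℝ) : OnePoint ℝ)) ∧
            opLE (((0 : ℝ) : OnePoint ℝ)) (mob h ∞)) :
    ∃! L : List ℕ, (∀ k ∈ L, 1 ≤ k ∧ k ≤ q - 1) ∧
      (h.1 = (L.map (fun k => pMat q (k : ℤ))).prod * Smat.1 ∨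
       h.1 = -((L.map (fun k => pMat q (k : ℤ))).prod * Smat.1)) := by
  obtain ⟨hc, hac, hcd⟩ := entries_of_order hord
  have hN := mem_normalForms_of_mem_Hecke (by omega) hh
  obtain ⟨L, hL, hEq⟩ : ∃ L : List ℕ, (∀ k ∈ L, 1 ≤ k ∧ k ≤ q - 1) ∧
      (h.1 = pProd q L * Smat.1 ∨ h.1 = -(pProd q L * Smat.1)) := by
    rcases hc.lt_or_gt with hneg | hpos
    · obtain ⟨L, hL, e⟩ := exists_eq_neg_pProd_mul_Smat hq (neg_mem_normalForms hN)
        (by rw [Matrix.neg_apply]; nlinarith) (by rwa [Matrix.neg_apply, neg_pos])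
        (by rw [Matrix.neg_apply]; nlinarith)
      exact ⟨L, hL, Or.inl (neg_inj.mp e)⟩
    · obtain ⟨L, hL, e⟩ := exists_eq_neg_pProd_mul_Smat hq hN (by nlinarith) hpos (by nlinarith)
      exact ⟨L, hL, Or.inr e⟩
  exact ⟨L, ⟨hL, hEq⟩, fun L' hL' => eq_of_pProd_mul_Smat hq hL'.1 hL hL'.2 hEq⟩
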